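/- arXiv:1902.09837 — 2 statements merged into one kernel-verified Lean document; each statement's English description precedes it below -/
import Mathlib

section
/- Let ω be a nonnegative integrable function on [0,1). If for some β > 0 there exists a constant C₁ > 0 such that ω_x ≤ C₁·x^β·(ω_{[β]})_x for all x ≥ 1 (where (ω_{[β]})_x = ∫_0^1 r^x (1−r)^β ω(r) dr), then ω ∈ M, i.e., there exist C > 1 and K > 1 with ω_x ≥ C·ω_{Kx} for all x ≥ 1. -/
set_option maxHeartbeats 1000000

open MeasureTheory Set

/-- Moment of a radial weight: `ω_x = ∫_0^1 r^x ω(r) dr`. -/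
noncomputable def mom (ω : ℝ → ℝ) (x : ℝ) : ℝ := ∫ r in Set.Ioo (0:ℝ) 1, r ^ x * ω r

private lemma aux_int {ω : ℝ → ℝ} (hint : MeasureTheory.IntegrableOn ω (Set.Ico 0 1))
    {g : ℝ → ℝ} (hg : Measurable g) (hbd : ∀ r ∈ Set.Ioo (0:ℝ) 1, |g r| ≤ 1) :
    MeasureTheory.IntegrableOn (fun r => g r * ω r) (Set.Ioo 0 1) := by
  have hω : MeasureTheory.IntegrableOn ω (Set.Ioo 0 1) :=
    hint.mono_set Set.Ioo_subset_Ico_self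
  refine MeasureTheory.Integrable.mono hω
    (hg.aestronglyMeasurable.mul hω.aestronglyMeasurable) ?_
  filter_upwards [ae_restrict_mem measurableSet_Ioo] with r hr
  rw [norm_mul]
  calc ‖g r‖ * ‖ω r‖ ≤ 1 * ‖ω r‖ :=
        mul_le_mul_of_nonneg_right (by rw [Real.norm_eq_abs]; exact hbd r hr) (norm_nonneg _)
    _ = ‖ω r‖ := one_mul _

private lemma pow_int {ω : ℝ → ℝ} (hint : MeasureTheory.IntegrableOn ω (Set.Ico 0 1))
    {y : ℝ} (hy : 0 ≤ y) :
    MeasureTheory.IntegrableOn (fun r => r ^ y * ω r) (Set.Ioo 0 1) := by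
  refine aux_int hint ((Real.continuous_rpow_const hy).measurable) ?_
  intro r hr
  rw [abs_of_nonneg (Real.rpow_nonneg hr.1.le _)]
  exact Real.rpow_le_one hr.1.le hr.2.le hy

private lemma powb_int {ω : ℝ → ℝ} (hint : MeasureTheory.IntegrableOn ω (Set.Ico 0 1))
    {y β : ℝ} (hy : 0 ≤ y) (hβ : 0 ≤ β) :
    MeasureTheory.IntegrableOn (fun r => r ^ y * (1 - r) ^ β * ω r) (Set.Ioo 0 1) := by
  refine aux_int hint (((Real.continuous_rpow_const hy).mul
    (((Real.continuous_rpow_const hβ).comp (continuous_const.sub continuous_id)))).measurable) ?_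
  intro r hr
  have h1 : (0:ℝ) ≤ 1 - r := by linarith [hr.2.le]
  have h2 := Real.rpow_le_one hr.1.le hr.2.le hy
  have h3 := Real.rpow_le_one h1 (by linarith [hr.1.le]) hβ
  rw [abs_of_nonneg (mul_nonneg (Real.rpow_nonneg hr.1.le _) (Real.rpow_nonneg h1 _))]
  nlinarith [Real.rpow_nonneg hr.1.le y, Real.rpow_nonneg h1 β]

private lemma mom_nonneg {ω : ℝ → ℝ} (hnn : ∀ r ∈ Set.Ico (0:ℝ) 1, 0 ≤ ω r) (y : ℝ) :
    0 ≤ mom ω y :=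
  setIntegral_nonneg measurableSet_Ioo fun r hr =>
    mul_nonneg (Real.rpow_nonneg hr.1.le _) (hnn r ⟨hr.1.le, hr.2⟩)

private lemma mom_mono {ω : ℝ → ℝ} (hnn : ∀ r ∈ Set.Ico (0:ℝ) 1, 0 ≤ ω r)
    (hint : MeasureTheory.IntegrableOn ω (Set.Ico 0 1)) {y z : ℝ} (hy : 0 ≤ y) (hyz : y ≤ z) :
    mom ω z ≤ mom ω y := by
  refine setIntegral_mono_on (pow_int hint (le_trans hy hyz)) (pow_int hint hy)
    measurableSet_Ioo fun r hr => ?_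
  exact mul_le_mul_of_nonneg_right
    (Real.rpow_le_rpow_of_exponent_ge hr.1 hr.2.le hyz) (hnn r ⟨hr.1.le, hr.2⟩)

/-- `r^y ≤ exp(-(y*(1-r)))` for `0 < r ≤ 1`, `0 ≤ y`. -/
private lemma rpow_le_exp' {r y : ℝ} (hr0 : 0 < r) (hr1 : r ≤ 1) (hy : 0 ≤ y) :
    r ^ y ≤ Real.exp (-(y * (1 - r))) := by
  have h1 : r ≤ Real.exp (r - 1) := by
    have := Real.add_one_le_exp (r - 1); linarith
  calc r ^ y ≤ (Real.exp (r - 1)) ^ y := Real.rpow_le_rpow hr0.le h1 hy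
    _ = Real.exp ((r - 1) * y) := (Real.exp_mul _ _).symm
    _ = Real.exp (-(y * (1 - r))) := by ring_nf

/-- If `ω_x ≤ C₁ x^β (ω_[β])_x` for all `x ≥ 1` and some `β > 0`, then `ω ∈ M`. -/
theorem moment_beta_bound_implies_M (ω : ℝ → ℝ)
    (hnn : ∀ r ∈ Set.Ico (0:ℝ) 1, 0 ≤ ω r)
    (hint : MeasureTheory.IntegrableOn ω (Set.Ico 0 1))
    (β C₁ : ℝ) (hβ : 0 < β) (hC₁ : 0 < C₁)
    (h : ∀ x : ℝ, 1 ≤ x →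
      mom ω x ≤ C₁ * x ^ β * ∫ r in Set.Ioo (0:ℝ) 1, r ^ x * (1 - r) ^ β * ω r) :
    ∃ C > (1:ℝ), ∃ K > (1:ℝ), ∀ x : ℝ, 1 ≤ x → C * mom ω (K * x) ≤ mom ω x := by
  -- constants
  set η : ℝ := ((8*C₁)⁻¹) ^ (β⁻¹) with hη_def
  clear_value η
  have hη0 : 0 < η := by rw [hη_def]; positivity
  have hηβ : C₁ * η ^ β = 1/8 := by
    have e : η ^ β = (8*C₁)⁻¹ := by
      rw [hη_def, ← Real.rpow_mul (by positivity), inv_mul_cancel₀ hβ.ne', Real.rpow_one]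
    rw [e]; field_simp
  set S : ℝ := Real.exp (β * Real.log (2*β) - β) with hS_def
  clear_value S
  have hS0 : 0 < S := by rw [hS_def]; exact Real.exp_pos _
  -- `v^β ≤ S * exp (v/2)` for `v > 0`
  have hsup : ∀ v : ℝ, 0 < v → v ^ β ≤ S * Real.exp (v/2) := by
    intro v hv
    rw [Real.rpow_def_of_pos hv, hS_def, ← Real.exp_add]
    apply Real.exp_le_exp.mpr
    have h2β : (0:ℝ) < 2*β := by linarith
    have hlog : Real.log (v/(2*β)) ≤ v/(2*β) - 1 := Real.log_le_sub_one_of_pos (by positivity)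
    rw [Real.log_div hv.ne' h2β.ne'] at hlog
    have hmul := mul_le_mul_of_nonneg_left hlog hβ.le
    have hid : β * (v/(2*β)) = v/2 := by field_simp
    linarith [hmul, hid]
  set Q : ℝ := 8*C₁*(2:ℝ)^β*S with hQ_def
  clear_value Q
  have hQ0 : 0 < Q := by rw [hQ_def]; positivity
  set M : ℝ := max η (4*Real.log Q) with hM_def
  clear_value M
  have hM0 : 0 < M := by rw [hM_def]; exact lt_of_lt_of_le hη0 (le_max_left _ _)
  have hQM : C₁*(2:ℝ)^β*S*Real.exp (-(M/4)) ≤ 1/8 := by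
    have h1 : Real.exp (-(M/4)) ≤ Q⁻¹ := by
      rw [← Real.exp_log hQ0, ← Real.exp_neg]
      apply Real.exp_le_exp.mpr
      have : 4*Real.log Q ≤ M := by rw [hM_def]; exact le_max_right _ _
      linarith
    calc C₁*(2:ℝ)^β*S*Real.exp (-(M/4)) ≤ C₁*(2:ℝ)^β*S*Q⁻¹ :=
          mul_le_mul_of_nonneg_left h1 (by positivity)
      _ = 1/8 := by rw [hQ_def]; field_simp
  set κ : ℝ := 1 - Real.exp (-η) with hκ_def
  clear_value κ
  have hκ0 : 0 < κ := by
    have : Real.exp (-η) < 1 := Real.exp_lt_one_iff.mpr (by linarith)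
    rw [hκ_def]; linarith
  set P : ℝ := C₁*M^β/κ with hP_def
  clear_value P
  have hMβ0 : 0 < M^β := Real.rpow_pos_of_pos hM0 _
  have hP0 : 0 < P := by rw [hP_def]; positivity
  set C : ℝ := 1 + min 1 (κ/(4*C₁*M^β)) with hC_def
  clear_value C
  have hCmin0 : 0 < min 1 (κ/(4*C₁*M^β)) := lt_min one_pos (by positivity)
  have hC1 : 1 < C := by rw [hC_def]; linarith
  have hC2 : C ≤ 2 := by
    have := min_le_left 1 (κ/(4*C₁*M^β)); rw [hC_def]; linarith
  have hPC : P*(C-1) ≤ 1/4 := by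
    have h1 : C - 1 ≤ κ/(4*C₁*M^β) := by rw [hC_def]; simpa using min_le_right _ _
    calc P*(C-1) ≤ P*(κ/(4*C₁*M^β)) := mul_le_mul_of_nonneg_left h1 hP0.le
      _ = 1/4 := by rw [hP_def]; field_simp
  refine ⟨C, hC1, 4, by norm_num, ?_⟩
  intro x hx
  by_contra hcon
  push_neg at hcon
  have hx0 : (0:ℝ) < x := by linarith
  have hx2 : (0:ℝ) ≤ 2*x := by linarith
  have hx4 : (0:ℝ) ≤ 4*x := by linarith
  have hxβ0 : 0 < x^β := Real.rpow_pos_of_pos hx0 _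
  have h2xβ0 : 0 < (2*x)^β := Real.rpow_pos_of_pos (by linarith) _
  set a : ℝ := mom ω x with ha_def
  set b : ℝ := mom ω (2*x) with hb_def
  set c : ℝ := mom ω (4*x) with hc_def
  clear_value a b c
  have hc0 : 0 ≤ c := by rw [hc_def]; exact mom_nonneg hnn _
  have hcb : c ≤ b := by rw [hb_def, hc_def]; exact mom_mono hnn hint hx2 (by linarith)
  have hba : b ≤ a := by rw [ha_def, hb_def]; exact mom_mono hnn hint hx0.le (by linarith)
  have ha0 : 0 ≤ a := le_trans hc0 (le_trans hcb hba)
  -- the three coefficients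
  set k1 : ℝ := η^β/(2*x)^β with hk1_def
  set k2 : ℝ := M^β/((2*x)^β*κ) with hk2_def
  set k3 : ℝ := S*Real.exp (-(M/4))/x^β with hk3_def
  clear_value k1 k2 k3
  have hk10 : 0 ≤ k1 := by rw [hk1_def]; positivity
  have hk20 : 0 ≤ k2 := by rw [hk2_def]; positivity
  have hk30 : 0 ≤ k3 := by rw [hk3_def]; positivity
  -- pointwise inequality
  have hpt : ∀ r ∈ Set.Ioo (0:ℝ) 1, r ^ (2*x) * (1-r) ^ β * ω r ≤
      k1*(r^(2*x)*ω r) + k2*((r^(2*x) - r^(4*x))*ω r) + k3*(r^x*ω r) := by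
    intro r hr
    obtain ⟨hr0, hr1⟩ := hr
    have hw : 0 ≤ ω r := hnn r ⟨hr0.le, hr1⟩
    have h1r0 : 0 < 1 - r := by linarith
    have hrx : 0 ≤ r^x := Real.rpow_nonneg hr0.le _
    have hr2x : 0 ≤ r^(2*x) := Real.rpow_nonneg hr0.le _
    have hsub : r^(4*x) ≤ r^(2*x) :=
      Real.rpow_le_rpow_of_exponent_ge hr0 hr1.le (by linarith)
    have ht10 : 0 ≤ k1*(r^(2*x)*ω r) := mul_nonneg hk10 (mul_nonneg hr2x hw)
    have ht20 : 0 ≤ k2*((r^(2*x) - r^(4*x))*ω r) :=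
      mul_nonneg hk20 (mul_nonneg (by linarith) hw)
    have ht30 : 0 ≤ k3*(r^x*ω r) := mul_nonneg hk30 (mul_nonneg hrx hw)
    by_cases hA : 1 - r < η/(2*x)
    · -- region I : `1-r` tiny
      have hb1 : (1-r)^β ≤ k1 := by
        rw [hk1_def, ← Real.div_rpow hη0.le hx2]
        exact Real.rpow_le_rpow h1r0.le hA.le hβ.le
      have key := mul_le_mul_of_nonneg_right (mul_le_mul_of_nonneg_left hb1 hr2x) hw
      linarith
    · push_neg at hA
      rw [div_le_iff₀ (by linarith : (0:ℝ) < 2*x)] at hA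
      by_cases hB : 1 - r ≤ M/(2*x)
      · -- region II : `1-r` moderate
        have hb1 : (1-r)^β ≤ M^β/(2*x)^β := by
          rw [← Real.div_rpow hM0.le hx2]
          exact Real.rpow_le_rpow h1r0.le hB hβ.le
        have hexp : r^(2*x) ≤ Real.exp (-η) := by
          calc r^(2*x) ≤ Real.exp (-((2*x)*(1-r))) := rpow_le_exp' hr0 hr1.le hx2
            _ ≤ Real.exp (-η) := Real.exp_le_exp.mpr (by linarith)
        have h4x : r^(4*x) = r^(2*x)*r^(2*x) := by
          rw [show (4:ℝ)*x = 2*x + 2*x by ring, Real.rpow_add hr0]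
        have hgap : κ * r^(2*x) ≤ r^(2*x) - r^(4*x) := by
          rw [h4x, hκ_def]
          linarith [mul_nonneg hr2x (sub_nonneg.mpr hexp)]
        have e1 := mul_le_mul_of_nonneg_right (mul_le_mul_of_nonneg_left hb1 hr2x) hw
        have e3 : k2 * κ = M^β/(2*x)^β := by
          rw [hk2_def]; field_simp <;> ring
        have e4 := mul_le_mul_of_nonneg_left (mul_le_mul_of_nonneg_right hgap hw) hk20
        have key : r ^ (2*x) * (1-r) ^ β * ω r ≤ k2*((r^(2*x) - r^(4*x))*ω r) := by
          calc r ^ (2*x) * (1-r) ^ β * ω r ≤ r^(2*x) * (M^β/(2*x)^β) * ω r := e1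
            _ = k2*((κ * r^(2*x))*ω r) := by rw [← e3]; ring
            _ ≤ k2*((r^(2*x) - r^(4*x))*ω r) := e4
        linarith [key, ht10, ht30]
      · -- region III : `1-r` large
        push_neg at hB
        rw [div_lt_iff₀ (by linarith : (0:ℝ) < 2*x)] at hB
        set v : ℝ := x*(1-r) with hv_def
        clear_value v
        have hv0 : 0 < v := by rw [hv_def]; exact mul_pos hx0 h1r0
        have hvM : M/2 ≤ v := by rw [hv_def]; linarith [hB]
        have h2x : r^(2*x) = r^x*r^x := by
          rw [show (2:ℝ)*x = x + x by ring, Real.rpow_add hr0]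
        have hrexp : r^x ≤ Real.exp (-v) := by
          calc r^x ≤ Real.exp (-(x*(1-r))) := rpow_le_exp' hr0 hr1.le hx0.le
            _ = Real.exp (-v) := by rw [hv_def]
        have h1rβ : (1-r)^β = v^β/x^β := by
          have e : (1:ℝ) - r = v/x := by rw [hv_def]; field_simp
          rw [e, Real.div_rpow hv0.le hx0.le]
        have hvβ : v^β ≤ S * Real.exp (v/2) := hsup v hv0
        have S1 : r^x * v^β ≤ S*Real.exp (-(M/4)) := by
          have m1 : r^x * v^β ≤ Real.exp (-v) * (S*Real.exp (v/2)) :=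
            mul_le_mul hrexp hvβ (Real.rpow_nonneg hv0.le β) (Real.exp_pos _).le
          have m2 : Real.exp (-v) * (S*Real.exp (v/2)) = S*Real.exp (-(v/2)) := by
            rw [show Real.exp (-v) * (S*Real.exp (v/2)) = S*(Real.exp (-v)*Real.exp (v/2)) by ring,
              ← Real.exp_add, show -v + v/2 = -(v/2) by ring]
          have m3 : Real.exp (-(v/2)) ≤ Real.exp (-(M/4)) := Real.exp_le_exp.mpr (by linarith)
          rw [m2] at m1
          have m4 := mul_le_mul_of_nonneg_left m3 hS0.le
          linarith [m1, m4]
        have c1 : r ^ (2*x) * (1-r) ^ β ≤ k3 * r^x := by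
          rw [h2x, h1rβ, hk3_def, div_eq_mul_inv, div_eq_mul_inv]
          have hinv : (0:ℝ) ≤ (x^β)⁻¹ := by positivity
          have := mul_le_mul_of_nonneg_right (mul_le_mul_of_nonneg_left S1 hrx) hinv
          linarith [this]
        have key := mul_le_mul_of_nonneg_right c1 hw
        linarith [key, ht10, ht20]
  -- integrate the pointwise inequality
  have IF0 := pow_int hint hx0.le
  have IF1 := pow_int hint hx2
  have IF2 := pow_int hint hx4
  have IFβ := powb_int hint hx2 hβ.le
  have Imid : MeasureTheory.IntegrableOn
      (fun r => (r^(2*x) - r^(4*x))*ω r) (Set.Ioo 0 1) := by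
    have e : (fun r : ℝ => (r^(2*x) - r^(4*x))*ω r)
        = fun r => r^(2*x)*ω r - r^(4*x)*ω r := by funext r; ring
    rw [e]; exact IF1.sub IF2
  have hb' : (∫ r in Set.Ioo (0:ℝ) 1, r^(2*x)*ω r) = b := by rw [hb_def]; rfl
  have hc' : (∫ r in Set.Ioo (0:ℝ) 1, r^(4*x)*ω r) = c := by rw [hc_def]; rfl
  have ha' : (∫ r in Set.Ioo (0:ℝ) 1, r^x*ω r) = a := by rw [ha_def]; rfl
  have Ig1 : MeasureTheory.IntegrableOn (fun r => k1*(r^(2*x)*ω r)) (Set.Ioo 0 1) :=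
    IF1.const_mul k1
  have Ig2 : MeasureTheory.IntegrableOn
      (fun r => k2*((r^(2*x) - r^(4*x))*ω r)) (Set.Ioo 0 1) := Imid.const_mul k2
  have Ig3 : MeasureTheory.IntegrableOn (fun r => k3*(r^x*ω r)) (Set.Ioo 0 1) :=
    IF0.const_mul k3
  have Ig12 : MeasureTheory.IntegrableOn
      (fun r => k1*(r^(2*x)*ω r) + k2*((r^(2*x) - r^(4*x))*ω r)) (Set.Ioo 0 1) := Ig1.add Ig2
  have hJ : (∫ r in Set.Ioo (0:ℝ) 1, r ^ (2*x) * (1-r) ^ β * ω r)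
      ≤ k1*b + k2*(b - c) + k3*a := by
    calc (∫ r in Set.Ioo (0:ℝ) 1, r ^ (2*x) * (1-r) ^ β * ω r)
        ≤ ∫ r in Set.Ioo (0:ℝ) 1,
            (k1*(r^(2*x)*ω r) + k2*((r^(2*x) - r^(4*x))*ω r) + k3*(r^x*ω r)) :=
          setIntegral_mono_on IFβ (Ig12.add Ig3) measurableSet_Ioo hpt
      _ = k1*b + k2*(b - c) + k3*a := by
          rw [integral_add Ig12 Ig3, integral_add Ig1 Ig2,
            integral_const_mul, integral_const_mul, integral_const_mul]
          have hmid : (∫ r in Set.Ioo (0:ℝ) 1, (r^(2*x) - r^(4*x))*ω r) = b - c := by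
            have e : (fun r : ℝ => (r^(2*x) - r^(4*x))*ω r)
                = fun r => r^(2*x)*ω r - r^(4*x)*ω r := by funext r; ring
            rw [e, integral_sub IF1 IF2, hb', hc']
          rw [hmid, hb', ha']
  -- combine with the hypothesis at `2x`
  have hmain : b ≤ C₁*(2*x)^β*(k1*b + k2*(b - c) + k3*a) := by
    have h2x1 : (1:ℝ) ≤ 2*x := by linarith
    have := h (2*x) h2x1
    rw [← hb_def] at this
    calc b ≤ C₁ * (2*x) ^ β * ∫ r in Set.Ioo (0:ℝ) 1, r ^ (2*x) * (1 - r) ^ β * ω r := this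
      _ ≤ C₁*(2*x)^β*(k1*b + k2*(b - c) + k3*a) :=
          mul_le_mul_of_nonneg_left hJ (by positivity)
  have e1 : C₁*(2*x)^β*k1 = 1/8 := by
    rw [hk1_def]
    have e0 : C₁*(2*x)^β*(η^β/(2*x)^β) = C₁*η^β := by field_simp <;> ring
    rw [e0, hηβ]
  have e2 : C₁*(2*x)^β*k2 = P := by
    rw [hk2_def, hP_def]
    field_simp <;> ring
  have h2xβ : (2*x)^β = (2:ℝ)^β*x^β := Real.mul_rpow (by norm_num) hx0.le
  have e3 : C₁*(2*x)^β*k3 ≤ 1/8 := by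
    rw [hk3_def, h2xβ]
    calc C₁*((2:ℝ)^β*x^β)*(S*Real.exp (-(M/4))/x^β)
        = C₁*(2:ℝ)^β*S*Real.exp (-(M/4)) := by field_simp <;> ring
      _ ≤ 1/8 := hQM
  have e30 : 0 ≤ C₁*(2*x)^β*k3 := by positivity
  have hexpand : C₁*(2*x)^β*(k1*b + k2*(b - c) + k3*a)
      = (C₁*(2*x)^β*k1)*b + (C₁*(2*x)^β*k2)*(b-c) + (C₁*(2*x)^β*k3)*a := by ring
  rw [hexpand, e1, e2] at hmain
  -- final arithmetic contradiction
  have hbc' : b - c ≤ (C-1)*c := by linarith [hcon, hba]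
  have hq1 : P*(b-c) ≤ (1/4)*c := by
    linarith [mul_le_mul_of_nonneg_left hbc' hP0.le, mul_le_mul_of_nonneg_right hPC hc0]
  have hq2 : (C₁*(2*x)^β*k3)*a ≤ (1/8)*a := mul_le_mul_of_nonneg_right e3 ha0
  have hq3 : C*c ≤ 2*c := mul_le_mul_of_nonneg_right hC2 hc0
  linarith
end

section
/- Let ω be a nonnegative integrable function on [0,1) with ω̂(r) > 0 for all r, and suppose ω ∈ D̂ ∩ M (that is, ω̂(r) ≤ C₁·ω̂((1+r)/2) for all r, and ω_x ≥ C₂·ω_{Kx} for all x ≥ 1 with C₂ > 1, K > 1). Then ω ∈ Ď: there exist K' > 1 and C' > 1 such that ω̂(r) ≥ C'·ω̂(1 − (1−r)/K') for all 0 ≤ r < 1. Consequently D̂ ∩ M = D̂ ∩ Ď. -/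
open MeasureTheory Set

/-- Tail integral of a radial weight. -/
noncomputable def tailInt (ω : ℝ → ℝ) (r : ℝ) : ℝ := ∫ s in Set.Ioo r 1, ω s

section Aux

variable {ω : ℝ → ℝ}

lemma aux_tail_nonneg (hnn : ∀ r ∈ Set.Ico (0:ℝ) 1, 0 ≤ ω r) {a : ℝ} (ha : 0 ≤ a) :
    0 ≤ tailInt ω a := by
  apply setIntegral_nonneg measurableSet_Ioo
  intro x hx
  exact hnn x ⟨le_trans ha hx.1.le, hx.2⟩

lemma aux_tail_mono (hnn : ∀ r ∈ Set.Ico (0:ℝ) 1, 0 ≤ ω r)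
    (hint : MeasureTheory.IntegrableOn ω (Set.Ico 0 1)) {a b : ℝ} (ha : 0 ≤ a) (hab : a ≤ b) :
    tailInt ω b ≤ tailInt ω a := by
  unfold tailInt
  apply setIntegral_mono_set
  · exact hint.mono_set (fun x hx => ⟨le_trans ha hx.1.le, hx.2⟩)
  · exact ae_restrict_of_forall_mem measurableSet_Ioo
      (fun x hx => hnn x ⟨le_trans ha hx.1.le, hx.2⟩)
  · exact (Set.Ioo_subset_Ioo_left hab).eventuallyLE

lemma aux_mom_integrableOn (hnn : ∀ r ∈ Set.Ico (0:ℝ) 1, 0 ≤ ω r)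
    (hint : MeasureTheory.IntegrableOn ω (Set.Ico 0 1)) {x : ℝ} (hx : 0 ≤ x) :
    MeasureTheory.IntegrableOn (fun r => r ^ x * ω r) (Set.Ioo (0:ℝ) 1) := by
  have h1 : MeasureTheory.IntegrableOn ω (Set.Ioo (0:ℝ) 1) :=
    hint.mono_set (fun r hr => ⟨hr.1.le, hr.2⟩)
  apply MeasureTheory.Integrable.bdd_mul (c := 1) h1
  · exact ((Real.continuous_rpow_const hx).measurable.aestronglyMeasurable)
  · apply ae_restrict_of_forall_mem measurableSet_Ioo
    intro r hr
    rw [Real.norm_eq_abs, abs_of_nonneg (Real.rpow_nonneg hr.1.le x)]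
    exact Real.rpow_le_one hr.1.le hr.2.le hx

lemma aux_mom_nonneg (hnn : ∀ r ∈ Set.Ico (0:ℝ) 1, 0 ≤ ω r) {x : ℝ} :
    0 ≤ mom ω x := by
  apply setIntegral_nonneg measurableSet_Ioo
  intro r hr
  exact mul_nonneg (Real.rpow_nonneg hr.1.le x) (hnn r ⟨hr.1.le, hr.2⟩)

lemma aux_mom_le_tail (hnn : ∀ r ∈ Set.Ico (0:ℝ) 1, 0 ≤ ω r)
    (hint : MeasureTheory.IntegrableOn ω (Set.Ico 0 1)) {x : ℝ} (hx : 0 ≤ x) :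
    mom ω x ≤ tailInt ω 0 := by
  unfold mom tailInt
  apply setIntegral_mono_on (aux_mom_integrableOn hnn hint hx)
    (hint.mono_set (fun r hr => ⟨hr.1.le, hr.2⟩)) measurableSet_Ioo
  intro r hr
  calc r ^ x * ω r ≤ 1 * ω r :=
        mul_le_mul_of_nonneg_right (Real.rpow_le_one hr.1.le hr.2.le hx)
          (hnn r ⟨hr.1.le, hr.2⟩)
    _ = ω r := one_mul _

/-- lower bound: `t^x * ω̂(t) ≤ ω_x` for `t ∈ [0,1)`, `x ≥ 0`. -/
lemma aux_mom_lower (hnn : ∀ r ∈ Set.Ico (0:ℝ) 1, 0 ≤ ω r)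
    (hint : MeasureTheory.IntegrableOn ω (Set.Ico 0 1)) {x t : ℝ} (hx : 0 ≤ x)
    (ht0 : 0 ≤ t) (ht1 : t < 1) :
    t ^ x * tailInt ω t ≤ mom ω x := by
  have hsub : Set.Ioo t 1 ⊆ Set.Ioo (0:ℝ) 1 := Set.Ioo_subset_Ioo_left ht0
  have hIω : MeasureTheory.IntegrableOn (fun r => r ^ x * ω r) (Set.Ioo t 1) :=
    (aux_mom_integrableOn hnn hint hx).mono_set hsub
  have h1 : t ^ x * tailInt ω t = ∫ r in Set.Ioo t 1, t ^ x * ω r := by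
    rw [tailInt, MeasureTheory.integral_const_mul]
  rw [h1]
  calc (∫ r in Set.Ioo t 1, t ^ x * ω r) ≤ ∫ r in Set.Ioo t 1, r ^ x * ω r := by
        apply setIntegral_mono_on _ hIω measurableSet_Ioo
        · intro r hr
          exact mul_le_mul_of_nonneg_right
            (Real.rpow_le_rpow ht0 hr.1.le hx)
            (hnn r ⟨le_trans ht0 hr.1.le, hr.2⟩)
        · exact MeasureTheory.Integrable.const_mul
            (hint.mono_set (fun r hr => ⟨le_trans ht0 hr.1.le, hr.2⟩)) _
    _ ≤ mom ω x := by
        apply setIntegral_mono_set (aux_mom_integrableOn hnn hint hx)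
        · apply ae_restrict_of_forall_mem measurableSet_Ioo
          intro r hr
          exact mul_nonneg (Real.rpow_nonneg hr.1.le x) (hnn r ⟨hr.1.le, hr.2⟩)
        · exact hsub.eventuallyLE

/-- splitting + head/tail estimate: `ω_x ≤ t^(x/2) ω_{x/2} + ω̂(t)`. -/
lemma aux_mom_split (hnn : ∀ r ∈ Set.Ico (0:ℝ) 1, 0 ≤ ω r)
    (hint : MeasureTheory.IntegrableOn ω (Set.Ico 0 1)) {x t : ℝ} (hx : 0 ≤ x)
    (ht0 : 0 ≤ t) (ht1 : t < 1) :
    mom ω x ≤ t ^ (x/2) * mom ω (x/2) + tailInt ω t := by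
  have hx2 : 0 ≤ x/2 := by linarith
  have hI : MeasureTheory.IntegrableOn (fun r => r ^ x * ω r) (Set.Ioo (0:ℝ) 1) :=
    aux_mom_integrableOn hnn hint hx
  have hI2 : MeasureTheory.IntegrableOn (fun r => r ^ (x/2) * ω r) (Set.Ioo (0:ℝ) 1) :=
    aux_mom_integrableOn hnn hint hx2
  have hunion : Set.Ioc (0:ℝ) t ∪ Set.Ioo t 1 = Set.Ioo (0:ℝ) 1 :=
    Set.Ioc_union_Ioo_eq_Ioo ht0 ht1
  have hsub1 : Set.Ioc (0:ℝ) t ⊆ Set.Ioo (0:ℝ) 1 := by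
    rw [← hunion]; exact Set.subset_union_left
  have hsub2 : Set.Ioo t 1 ⊆ Set.Ioo (0:ℝ) 1 := by
    rw [← hunion]; exact Set.subset_union_right
  have hsplit : mom ω x
      = (∫ r in Set.Ioc (0:ℝ) t, r ^ x * ω r) + ∫ r in Set.Ioo t 1, r ^ x * ω r := by
    rw [mom, ← hunion]
    have hdisj : Disjoint (Set.Ioc (0:ℝ) t) (Set.Ioo t 1) := by
      apply Set.disjoint_left.mpr
      rintro y ⟨_, hyt⟩ ⟨hty, _⟩
      exact absurd hyt (not_le.mpr hty)
    exact setIntegral_union hdisj measurableSet_Ioo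
      (hI.mono_set hsub1) (hI.mono_set hsub2)
  rw [hsplit]
  have hhead : (∫ r in Set.Ioc (0:ℝ) t, r ^ x * ω r) ≤ t ^ (x/2) * mom ω (x/2) := by
    calc (∫ r in Set.Ioc (0:ℝ) t, r ^ x * ω r)
        ≤ ∫ r in Set.Ioc (0:ℝ) t, t ^ (x/2) * (r ^ (x/2) * ω r) := by
          apply setIntegral_mono_on (hI.mono_set hsub1)
            ((hI2.mono_set hsub1).const_mul _) measurableSet_Ioc
          intro r hr
          have hr01 : r ∈ Set.Ioo (0:ℝ) 1 := hsub1 hr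
          have h1 : r ^ x = r ^ (x/2) * r ^ (x/2) := by
            rw [← Real.rpow_add hr01.1]; ring_nf
          rw [h1, mul_assoc]
          exact mul_le_mul_of_nonneg_right (Real.rpow_le_rpow hr01.1.le hr.2 hx2)
            (mul_nonneg (Real.rpow_nonneg hr01.1.le _) (hnn r ⟨hr01.1.le, hr01.2⟩))
      _ = t ^ (x/2) * ∫ r in Set.Ioc (0:ℝ) t, r ^ (x/2) * ω r :=
          MeasureTheory.integral_const_mul _ _
      _ ≤ t ^ (x/2) * mom ω (x/2) := by
          apply mul_le_mul_of_nonneg_left _ (Real.rpow_nonneg ht0 _)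
          apply setIntegral_mono_set hI2
          · apply ae_restrict_of_forall_mem measurableSet_Ioo
            intro r hr
            exact mul_nonneg (Real.rpow_nonneg hr.1.le _) (hnn r ⟨hr.1.le, hr.2⟩)
          · exact hsub1.eventuallyLE
  have htail : (∫ r in Set.Ioo t 1, r ^ x * ω r) ≤ tailInt ω t := by
    apply setIntegral_mono_on (hI.mono_set hsub2)
      (hint.mono_set (fun r hr => ⟨le_trans ht0 hr.1.le, hr.2⟩)) measurableSet_Ioo
    intro r hr
    have hr01 : r ∈ Set.Ioo (0:ℝ) 1 := hsub2 hr
    calc r ^ x * ω r ≤ 1 * ω r :=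
          mul_le_mul_of_nonneg_right (Real.rpow_le_one hr01.1.le hr01.2.le hx)
            (hnn r ⟨hr01.1.le, hr01.2⟩)
      _ = ω r := one_mul _
  linarith

end Aux

set_option maxHeartbeats 1000000 in
/-- If `ω ∈ D̂ ∩ M` then `ω ∈ Ď`; consequently `D̂ ∩ M = D̂ ∩ Ď`. -/
theorem Dhat_inter_M_subset_Dd (ω : ℝ → ℝ)
    (hnn : ∀ r ∈ Set.Ico (0:ℝ) 1, 0 ≤ ω r)
    (hint : MeasureTheory.IntegrableOn ω (Set.Ico 0 1))
    (hpos : ∀ r ∈ Set.Ico (0:ℝ) 1, 0 < tailInt ω r)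
    (C₁ : ℝ) (hC₁ : 1 ≤ C₁)
    (hDhat : ∀ r ∈ Set.Ico (0:ℝ) 1, tailInt ω r ≤ C₁ * tailInt ω ((1 + r) / 2))
    (C₂ K : ℝ) (hC₂ : 1 < C₂) (hK : 1 < K)
    (hM : ∀ x : ℝ, 1 ≤ x → C₂ * mom ω (K * x) ≤ mom ω x) :
    ∃ K' > (1:ℝ), ∃ C' > (1:ℝ), ∀ r ∈ Set.Ico (0:ℝ) 1,
      C' * tailInt ω (1 - (1 - r) / K') ≤ tailInt ω r := by
  have hC₁0 : 0 < C₁ := lt_of_lt_of_le one_pos hC₁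
  -- iterated doubling
  have hdouble : ∀ j : ℕ, ∀ r : ℝ, 0 ≤ r → r < 1 →
      tailInt ω r ≤ C₁ ^ j * tailInt ω (1 - (1 - r) / 2 ^ j) := by
    intro j
    induction j with
    | zero => intro r hr0 hr1; simp
    | succ j ih =>
      intro r hr0 hr1
      have h1r : 0 < 1 - r := by linarith
      have h2j : (0:ℝ) < 2 ^ j := by positivity
      have hrj0 : (0:ℝ) ≤ 1 - (1 - r) / 2 ^ j := by
        have : (1 - r) / 2 ^ j ≤ 1 - r := div_le_self h1r.le (one_le_pow₀ one_le_two)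
        linarith
      have hrj1 : 1 - (1 - r) / 2 ^ j < 1 := by
        have : 0 < (1 - r) / 2 ^ j := by positivity
        linarith
      have step := hDhat (1 - (1 - r) / 2 ^ j) ⟨hrj0, hrj1⟩
      have heq : (1 + (1 - (1 - r) / 2 ^ j)) / 2 = 1 - (1 - r) / 2 ^ (j+1) := by
        rw [pow_succ]; field_simp; ring
      rw [heq] at step
      calc tailInt ω r ≤ C₁ ^ j * tailInt ω (1 - (1 - r) / 2 ^ j) := ih r hr0 hr1
        _ ≤ C₁ ^ j * (C₁ * tailInt ω (1 - (1 - r) / 2 ^ (j+1))) :=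
            mul_le_mul_of_nonneg_left step (by positivity)
        _ = C₁ ^ (j+1) * tailInt ω (1 - (1 - r) / 2 ^ (j+1)) := by ring
  -- choose m ≥ 2 with exp(-(m/2)) * C₁ ≤ 1/2
  obtain ⟨m, hm2, hmexp⟩ : ∃ m : ℕ, 2 ≤ m ∧ Real.exp (-((m:ℝ)/2)) * C₁ ≤ 1/2 := by
    obtain ⟨m₀, hm₀⟩ := exists_nat_ge (4 * C₁)
    refine ⟨max 2 m₀, le_max_left _ _, ?_⟩
    set M : ℝ := ((max 2 m₀ : ℕ) : ℝ) with hMdef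
    have hm : (4:ℝ) * C₁ ≤ M := by
      calc (4:ℝ) * C₁ ≤ m₀ := hm₀
        _ ≤ M := by exact_mod_cast Nat.cast_le.mpr (le_max_right 2 m₀)
    have hMpos : 0 < M := lt_of_lt_of_le (by positivity) hm
    have hexp : M / 2 ≤ Real.exp (M/2) := by
      have := Real.add_one_le_exp (M/2); linarith
    have hinv : Real.exp (-(M/2)) ≤ 2 / M := by
      rw [Real.exp_neg]
      calc (Real.exp (M/2))⁻¹ ≤ (M/2)⁻¹ := by
            apply inv_anti₀ (by positivity) hexp
        _ = 2 / M := by rw [inv_div]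
    calc Real.exp (-(M/2)) * C₁ ≤ (2/M) * C₁ :=
          mul_le_mul_of_nonneg_right hinv hC₁0.le
      _ ≤ 1/2 := by
          rw [div_mul_eq_mul_div, div_le_div_iff₀ hMpos two_pos]
          linarith
  have hm2R : (2:ℝ) ≤ (m:ℝ) := by exact_mod_cast hm2
  -- choose j with m ≤ 2^j
  obtain ⟨j, hj⟩ : ∃ j : ℕ, (m:ℝ) ≤ 2 ^ j := by
    refine ⟨m, ?_⟩
    exact_mod_cast (Nat.lt_two_pow_self (n := m)).le
  set B : ℝ := 2 * C₁ ^ j with hBdef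
  have hBpos : 0 < B := by positivity
  -- main upper estimate by induction
  have key : ∀ n : ℕ, ∀ x : ℝ, 1 ≤ x → x ≤ (m:ℝ) * 2 ^ n →
      mom ω x ≤ B * tailInt ω (1 - 1/x) := by
    intro n
    induction n with
    | zero =>
      intro x hx1 hxm
      rw [pow_zero, mul_one] at hxm
      have hx0 : 0 < x := lt_of_lt_of_le one_pos hx1
      have hx1x : 0 ≤ 1 - 1/x := by
        have : 1/x ≤ 1 := by rw [div_le_one hx0]; exact hx1
        linarith
      have h2j' : (1:ℝ)/2^j ≤ 1/x := by
        apply one_div_le_one_div_of_le hx0 (le_trans hxm hj)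
      have hT : tailInt ω (1 - 1/2^j) ≤ tailInt ω (1 - 1/x) := by
        apply aux_tail_mono hnn hint hx1x (by linarith)
      have hd := hdouble j 0 le_rfl one_pos
      simp only [sub_zero] at hd
      calc mom ω x ≤ tailInt ω 0 := aux_mom_le_tail hnn hint (by linarith)
        _ ≤ C₁ ^ j * tailInt ω (1 - 1/2^j) := hd
        _ ≤ C₁ ^ j * tailInt ω (1 - 1/x) := mul_le_mul_of_nonneg_left hT (by positivity)
        _ ≤ B * tailInt ω (1 - 1/x) := by
            apply mul_le_mul_of_nonneg_right _ (aux_tail_nonneg hnn hx1x)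
            rw [hBdef]; nlinarith [pow_pos hC₁0 j]
    | succ n ih =>
      intro x hx1 hxm
      by_cases hcase : x ≤ (m:ℝ) * 2 ^ n
      · exact ih x hx1 hcase
      push_neg at hcase
      have hmx : (m:ℝ) ≤ x := by
        have h1 : (1:ℝ) ≤ 2 ^ n := one_le_pow₀ one_le_two
        nlinarith
      have hx2' : (2:ℝ) ≤ x := le_trans hm2R hmx
      have hx0 : (0:ℝ) < x := by linarith
      have hx1x : 0 ≤ 1 - 1/x := by
        have : 1/x ≤ 1 := by rw [div_le_one hx0]; linarith
        linarith
      -- t = 1 - m/x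
      set t : ℝ := 1 - (m:ℝ)/x with htdef
      have ht0 : 0 ≤ t := by
        have : (m:ℝ)/x ≤ 1 := by rw [div_le_one hx0]; exact hmx
        simp only [htdef]; linarith
      have ht1 : t < 1 := by
        have : 0 < (m:ℝ)/x := by positivity
        simp only [htdef]; linarith
      have hsplit := aux_mom_split hnn hint (by linarith : (0:ℝ) ≤ x) ht0 ht1
      -- IH applied to x/2
      have hx21 : (1:ℝ) ≤ x/2 := by linarith
      have hx2m : x/2 ≤ (m:ℝ) * 2 ^ n := by
        rw [pow_succ] at hxm; linarith
      have hIH := ih (x/2) hx21 hx2m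
      have h2x : 1 - 1/(x/2) = 1 - 2/x := by
        rw [one_div_div]
      rw [h2x] at hIH
      -- one doubling: tailInt (1-2/x) ≤ C₁ * tailInt (1-1/x)
      have hr2x0 : (0:ℝ) ≤ 1 - 2/x := by
        have : 2/x ≤ 1 := by rw [div_le_one hx0]; exact hx2'
        linarith
      have hr2x1 : 1 - 2/x < 1 := by
        have : 0 < 2/x := by positivity
        linarith
      have hd1 := hDhat (1 - 2/x) ⟨hr2x0, hr2x1⟩
      have heq1 : (1 + (1 - 2/x)) / 2 = 1 - 1/x := by field_simp; ring
      rw [heq1] at hd1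
      -- tailInt t ≤ C₁^j * tailInt (1-1/x)
      have hd2 : tailInt ω t ≤ C₁ ^ j * tailInt ω (1 - 1/x) := by
        have hdd := hdouble j t ht0 ht1
        have h1t : 1 - t = (m:ℝ)/x := by simp [htdef]
        rw [h1t] at hdd
        have hmono : tailInt ω (1 - (m:ℝ)/x / 2 ^ j) ≤ tailInt ω (1 - 1/x) := by
          apply aux_tail_mono hnn hint hx1x
          have : (m:ℝ)/x / 2^j ≤ 1/x := by
            rw [div_div, div_le_div_iff₀ (by positivity) hx0]
            calc (m:ℝ) * x ≤ 2^j * x := mul_le_mul_of_nonneg_right hj hx0.le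
              _ = 1 * (x * 2^j) := by ring
          linarith
        calc tailInt ω t ≤ C₁ ^ j * tailInt ω (1 - (m:ℝ)/x / 2 ^ j) := hdd
          _ ≤ C₁ ^ j * tailInt ω (1 - 1/x) := mul_le_mul_of_nonneg_left hmono (by positivity)
      -- t^(x/2) ≤ exp(-(m/2))
      have hT : t ^ (x/2) ≤ Real.exp (-((m:ℝ)/2)) := by
        have h1 : t ≤ Real.exp (-((m:ℝ)/x)) := by
          have := Real.add_one_le_exp (-((m:ℝ)/x))
          simp only [htdef]; linarith
        calc t ^ (x/2) ≤ (Real.exp (-((m:ℝ)/x))) ^ (x/2) :=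
              Real.rpow_le_rpow ht0 h1 (by linarith)
          _ = Real.exp (-((m:ℝ)/x) * (x/2)) := (Real.exp_mul _ _).symm
          _ = Real.exp (-((m:ℝ)/2)) := by
              congr 1
              field_simp
      -- combine
      set T : ℝ := tailInt ω (1 - 1/x) with hTdef
      have hTnn : 0 ≤ T := aux_tail_nonneg hnn hx1x
      have hmom2nn : 0 ≤ mom ω (x/2) := aux_mom_nonneg hnn
      have hc1 : t ^ (x/2) * mom ω (x/2) ≤ Real.exp (-((m:ℝ)/2)) * (B * (C₁ * T)) := by
        calc t ^ (x/2) * mom ω (x/2) ≤ Real.exp (-((m:ℝ)/2)) * mom ω (x/2) :=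
              mul_le_mul_of_nonneg_right hT hmom2nn
          _ ≤ Real.exp (-((m:ℝ)/2)) * (B * tailInt ω (1 - 2/x)) :=
              mul_le_mul_of_nonneg_left hIH (Real.exp_pos _).le
          _ ≤ Real.exp (-((m:ℝ)/2)) * (B * (C₁ * T)) := by
              apply mul_le_mul_of_nonneg_left _ (Real.exp_pos _).le
              exact mul_le_mul_of_nonneg_left hd1 hBpos.le
      have hfin : Real.exp (-((m:ℝ)/2)) * (B * (C₁ * T)) + C₁ ^ j * T ≤ B * T := by
        have h1 : Real.exp (-((m:ℝ)/2)) * (B * (C₁ * T)) ≤ (1/2) * (B * T) := by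
          have h0 : Real.exp (-((m:ℝ)/2)) * (B * (C₁ * T))
              = (Real.exp (-((m:ℝ)/2)) * C₁) * (B * T) := by ring
          rw [h0]
          exact mul_le_mul_of_nonneg_right hmexp (mul_nonneg hBpos.le hTnn)
        have h2 : C₁ ^ j * T = (B/2) * T := by rw [hBdef]; ring
        have h3 : (1/2) * (B * T) + (B/2) * T = B * T := by ring
        linarith
      calc mom ω x ≤ t ^ (x/2) * mom ω (x/2) + tailInt ω t := hsplit
        _ ≤ Real.exp (-((m:ℝ)/2)) * (B * (C₁ * T)) + C₁ ^ j * T := by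
            linarith [hc1, hd2]
        _ ≤ B * T := hfin
  have hupper : ∀ x : ℝ, 1 ≤ x → mom ω x ≤ B * tailInt ω (1 - 1/x) := by
    intro x hx1
    obtain ⟨n, hn⟩ := pow_unbounded_of_one_lt x (one_lt_two (α := ℝ))
    apply key n x hx1
    calc x ≤ 2 ^ n := hn.le
      _ ≤ (m:ℝ) * 2 ^ n := by nlinarith [pow_pos (two_pos (α := ℝ)) n]
  -- lower estimate
  have hlower : ∀ y : ℝ, 2 ≤ y → Real.exp (-2) * tailInt ω (1 - 1/y) ≤ mom ω y := by
    intro y hy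
    have hy0 : (0:ℝ) < y := by linarith
    have ht0 : 0 ≤ 1 - 1/y := by
      have : 1/y ≤ 1 := by rw [div_le_one hy0]; linarith
      linarith
    have ht1 : 1 - 1/y < 1 := by
      have : 0 < 1/y := by positivity
      linarith
    have hlow := aux_mom_lower hnn hint (by linarith : (0:ℝ) ≤ y) ht0 ht1
    have hexp2 : Real.exp (-2) ≤ (1 - 1/y) ^ y := by
      have hkey : Real.exp (-(2/y)) ≤ 1 - 1/y := by
        have ha : 1 + 2/y ≤ Real.exp (2/y) := by
          have := Real.add_one_le_exp (2/y); linarith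
        have hb : (1:ℝ) ≤ (1 - 1/y) * (1 + 2/y) := by
          have hu0 : (0:ℝ) < 1/y := by positivity
          have hu2 : 1/y ≤ 1/2 := by
            apply one_div_le_one_div_of_le two_pos hy
          have h3 : (0:ℝ) ≤ (1/y) * (1 - 2*(1/y)) :=
            mul_nonneg hu0.le (by linarith)
          have h4 : (2:ℝ)/y = 2 * (1/y) := by ring
          rw [h4]; nlinarith
        have hd : Real.exp (-(2/y)) * (1 + 2/y) ≤ 1 := by
          calc Real.exp (-(2/y)) * (1 + 2/y) ≤ Real.exp (-(2/y)) * Real.exp (2/y) :=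
                mul_le_mul_of_nonneg_left ha (Real.exp_pos _).le
            _ = 1 := by rw [← Real.exp_add]; simp
        have h12 : (0:ℝ) < 1 + 2/y := by positivity
        have := le_trans hd hb
        exact le_of_mul_le_mul_right this h12
      calc Real.exp (-2) = (Real.exp (-(2/y))) ^ y := by
            rw [← Real.exp_mul]; congr 1; field_simp
        _ ≤ (1 - 1/y) ^ y := Real.rpow_le_rpow (Real.exp_pos _).le hkey hy0.le
    have := mul_le_mul_of_nonneg_right hexp2 (aux_tail_nonneg hnn ht0)
    linarith
  -- iterate M
  have hKpos : (0:ℝ) < K := by linarith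
  have hMiter : ∀ n : ℕ, ∀ x : ℝ, 1 ≤ x → C₂ ^ n * mom ω (K ^ n * x) ≤ mom ω x := by
    intro n
    induction n with
    | zero => intro x hx; simp
    | succ n ih =>
      intro x hx
      have hKn1 : (1:ℝ) ≤ K ^ n * x := by
        calc (1:ℝ) = 1 * 1 := by ring
          _ ≤ K ^ n * x := mul_le_mul (one_le_pow₀ hK.le) hx one_pos.le
              (by positivity)
      have step := hM (K ^ n * x) hKn1
      have heq : K ^ (n+1) * x = K * (K ^ n * x) := by ring
      calc C₂ ^ (n+1) * mom ω (K ^ (n+1) * x)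
          = C₂ ^ n * (C₂ * mom ω (K * (K ^ n * x))) := by rw [heq]; ring
        _ ≤ C₂ ^ n * mom ω (K ^ n * x) :=
            mul_le_mul_of_nonneg_left step (by positivity)
        _ ≤ mom ω x := ih x hx
  -- choose n
  obtain ⟨n₁, hn₁⟩ := pow_unbounded_of_one_lt (2 * B * Real.exp 2) hC₂
  obtain ⟨n₂, hn₂⟩ := pow_unbounded_of_one_lt (2:ℝ) hK
  set n := max n₁ n₂ with hndef
  have hCn : 2 * B * Real.exp 2 ≤ C₂ ^ n :=
    le_trans hn₁.le (pow_le_pow_right₀ hC₂.le (le_max_left _ _))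
  have hKn2 : (2:ℝ) ≤ K ^ n :=
    le_trans hn₂.le (pow_le_pow_right₀ hK.le (le_max_right _ _))
  refine ⟨K ^ n, lt_of_lt_of_le one_lt_two hKn2, 2, one_lt_two, ?_⟩
  intro r hr
  have hr0 : (0:ℝ) ≤ r := hr.1
  have hr1 : r < 1 := hr.2
  have h1r : (0:ℝ) < 1 - r := by linarith
  set x : ℝ := 1 / (1 - r) with hxdef
  have hx1 : (1:ℝ) ≤ x := by
    rw [hxdef, le_div_iff₀ h1r]; linarith
  have hx0 : (0:ℝ) < x := by positivity
  have hrx : 1 - 1/x = r := by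
    rw [hxdef, one_div_one_div]; ring
  have hKnpos : (0:ℝ) < K ^ n := by positivity
  have hKnx2 : (2:ℝ) ≤ K ^ n * x := by nlinarith
  have hA := hupper x hx1
  rw [hrx] at hA
  have hB' := hMiter n x hx1
  have hC := hlower (K ^ n * x) hKnx2
  have hpteq : 1 - 1/(K ^ n * x) = 1 - (1 - r)/(K ^ n) := by
    congr 1
    rw [hxdef]
    field_simp
  rw [hpteq] at hC
  set T' : ℝ := tailInt ω (1 - (1 - r)/(K ^ n)) with hT'def
  have hpt0 : (0:ℝ) ≤ 1 - (1 - r)/(K ^ n) := by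
    have h1 : (1 - r)/(K ^ n) ≤ (1 - r)/1 :=
      div_le_div_of_nonneg_left h1r.le one_pos (by linarith)
    rw [div_one] at h1
    linarith
  have hT'nn : 0 ≤ T' := aux_tail_nonneg hnn hpt0
  -- 2*B ≤ C₂^n * exp(-2)
  have hee : Real.exp 2 * Real.exp (-2) = 1 := by
    rw [← Real.exp_add]; norm_num
  have h2B : 2 * B ≤ C₂ ^ n * Real.exp (-2) := by
    have := mul_le_mul_of_nonneg_right hCn (Real.exp_pos (-2)).le
    nlinarith
  -- chain
  have hchain : C₂ ^ n * (Real.exp (-2) * T') ≤ B * tailInt ω r := by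
    calc C₂ ^ n * (Real.exp (-2) * T') ≤ C₂ ^ n * mom ω (K ^ n * x) :=
          mul_le_mul_of_nonneg_left hC (by positivity)
      _ ≤ mom ω x := hB'
      _ ≤ B * tailInt ω r := hA
  have h2T : 2 * B * T' ≤ B * tailInt ω r := by
    calc 2 * B * T' ≤ (C₂ ^ n * Real.exp (-2)) * T' :=
          mul_le_mul_of_nonneg_right h2B hT'nn
      _ = C₂ ^ n * (Real.exp (-2) * T') := by ring
      _ ≤ B * tailInt ω r := hchain
  nlinarith
end
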